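/- arXiv:1405.5722 — 3 statements merged into one kernel-verified Lean document; each statement's English description precedes it below -/
import Mathlib

section
/- With notation as above, if additionally M is a finitely generated free ℤG-module of rank n and N is projective, then dt·dim_{ℤ/q} Ker(1_{ℤ/q} ⊗_{ℤG} f) ≥ dim_{Q(H')} Ker(1_{Q(H')^{dt}} ⊗_{ℤG} f). -/
/-!
Since `F(ℤG)` is a line spanned by some `u`, additivity of `F` makes `F((ℤG)^n)` spanned by the
images `v i` of `u` under the coordinate inclusions, so the image of `F f` is spanned by the
`F f (v i)`. Choose a subfamily indexed by `κ` that is a basis of this image and restrict `f` to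
the free summand `(ℤG)^κ`: `F` of the restriction is injective, hence so is `T` of it, and the
image of `T f` has dimension at least `dt · |κ|`. Rank–nullity for `F f` (on a space of dimension
`n`) and for `T f` (on a space of dimension `dt · n`) gives the inequality.
-/

open CategoryTheory

namespace ModuleCat

variable {R : Type u} [Ring R] {ι κ : Type}

def projHom (i : ι) : of R (ι → R) ⟶ of R R :=
  ofHom (LinearMap.proj i)

variable [DecidableEq ι]

noncomputable def singleHom (i : ι) : of R R ⟶ of R (ι → R) :=
  ofHom (LinearMap.single R (fun _ => R) i)

lemma sum_projHom_comp_singleHom [Fintype ι] :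
    ∑ i : ι, projHom (R := R) i ≫ singleHom i = 𝟙 _ := by
  refine hom_ext (LinearMap.ext fun x => ?_)
  simp [projHom, singleHom, hom_sum, Finset.univ_sum_single]

noncomputable def mapDomainHom [Fintype κ] (a : κ → ι) : of R (κ → R) ⟶ of R (ι → R) :=
  ofHom (Fintype.linearCombination R fun j => Pi.single (a j) 1)

lemma singleHom_comp_mapDomainHom [Fintype κ] [DecidableEq κ] (a : κ → ι) (j : κ) :
    singleHom (R := R) j ≫ mapDomainHom a = singleHom (a j) := by
  refine hom_ext (LinearMap.ext_ring ?_)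
  simp [singleHom, mapDomainHom, Fintype.linearCombination_apply_single]

end ModuleCat

namespace CategoryTheory.Functor

open ModuleCat

variable {R : Type u} [Ring R] {K : Type v} [DivisionRing K] {ι : Type} [Fintype ι]
  (F : ModuleCat.{u} R ⥤ ModuleCat.{w} K)

lemma rank_obj_pi [F.Additive] :
    Module.rank K (F.obj (ModuleCat.of R (ι → R))) =
      Fintype.card ι * Module.rank K (F.obj (ModuleCat.of R R)) := by
  let e := F.mapIso (biproductIsoPi fun _ : ι => ModuleCat.of R R).symm ≪≫
    F.mapBiproduct _ ≪≫ biproductIsoPi fun _ : ι => F.obj (ModuleCat.of R R)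
  rw [e.toLinearEquiv.rank_eq, rank_fun_eq_lift_mul]
  simp

variable [DecidableEq ι] {u : F.obj (ModuleCat.of R R)} {N : ModuleCat.{u} R}
  (g : ModuleCat.of R (ι → R) ⟶ N)

lemma map_comp_linearCombination :
    (F.map g).hom ∘ₗ Fintype.linearCombination K (fun i : ι => F.map (singleHom i) u) =
      Fintype.linearCombination K (fun i => F.map (singleHom i ≫ g) u) := by
  ext c
  simp [Fintype.linearCombination_apply, F.map_comp]

variable [F.Additive]

lemma span_range_map_singleHom_eq_top (hu : Submodule.span K {u} = ⊤) :
    Submodule.span K (Set.range fun i : ι => F.map (singleHom i) u) = ⊤ := by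
  refine Submodule.eq_top_iff'.mpr fun y => ?_
  have hy : y = ∑ i : ι, F.map (singleHom i) (F.map (projHom i) y) := by
    simpa [F.map_sum, hom_sum] using
      congr($(F.congr_map (sum_projHom_comp_singleHom (R := R) (ι := ι))).hom y).symm
  rw [hy]
  refine Submodule.sum_mem _ fun i _ => ?_
  obtain ⟨c, hc⟩ :=
    Submodule.mem_span_singleton.mp (hu ▸ Submodule.mem_top (x := F.map (projHom i) y))
  rw [← hc, (F.map (singleHom i)).hom.map_smul c u]
  exact Submodule.smul_mem _ c (Submodule.subset_span ⟨i, rfl⟩)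

lemma range_map_eq_span (hu : Submodule.span K {u} = ⊤) :
    LinearMap.range (F.map g).hom =
      Submodule.span K (Set.range fun i : ι => F.map (singleHom i ≫ g) u) := by
  rw [← Fintype.range_linearCombination, ← F.map_comp_linearCombination, LinearMap.range_comp,
    Fintype.range_linearCombination, F.span_range_map_singleHom_eq_top hu, Submodule.map_top]

lemma injective_map_of_linearIndependent (hu : Submodule.span K {u} = ⊤)
    (hg : LinearIndependent K fun i : ι => F.map (singleHom i ≫ g) u) :
    Function.Injective (F.map g) := by
  rw [linearIndependent_iff_injective_fintypeLinearCombination,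
    ← F.map_comp_linearCombination] at hg
  refine Function.Injective.of_comp_right hg ?_
  rw [← LinearMap.range_eq_top, Fintype.range_linearCombination,
    F.span_range_map_singleHom_eq_top hu]

lemma exists_mapDomainHom_injective_map_comp (hu : Submodule.span K {u} = ⊤) :
    ∃ (κ : Type) (_ : Fintype κ) (a : κ → ι),
      Module.rank K (LinearMap.range (F.map g).hom) = Fintype.card κ ∧
        Function.Injective (F.map (mapDomainHom a ≫ g)) := by
  classical
  set v : ι → F.obj N := fun i => F.map (singleHom i ≫ g) u
  obtain ⟨κ, a, ha, hspan, hli⟩ := exists_linearIndependent' K v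
  have : Finite κ := Finite.of_injective a ha
  have := Fintype.ofFinite κ
  refine ⟨κ, inferInstance, a, ?_, F.injective_map_of_linearIndependent _ hu ?_⟩
  · have := Module.Finite.span_of_finite K (Set.finite_range (v ∘ a))
    rw [F.range_map_eq_span g hu, ← hspan, ← finrank_span_eq_card hli, Module.finrank_eq_rank]
  · simpa only [← Category.assoc, singleHom_comp_mapDomainHom, Function.comp_def] using hli

end CategoryTheory.Functor

lemma LinearMap.rank_ker_le_mul_rank_ker {K L : Type*} {V W V' W' : Type u}
    [DivisionRing K] [DivisionRing L] [AddCommGroup V] [Module K V] [AddCommGroup W] [Module K W]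
    [AddCommGroup V'] [Module L V'] [AddCommGroup W'] [Module L W']
    (φ : V →ₗ[K] W) (ψ : V' →ₗ[L] W') (n c : ℕ) (hV : Module.rank K V = n)
    (hV' : Module.rank L V' = (n * c : ℕ))
    (hrange : Module.rank K (range φ) * (c : Cardinal) ≤ Module.rank L (range ψ)) :
    Module.rank L (ker ψ) ≤ (c : Cardinal) * Module.rank K (ker φ) := by
  have := Module.finite_of_rank_eq_nat hV
  have := Module.finite_of_rank_eq_nat hV'
  have hφ := φ.finrank_range_add_finrank_ker
  have hψ := ψ.finrank_range_add_finrank_ker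
  rw [Module.finrank_eq_of_rank_eq hV] at hφ
  rw [Module.finrank_eq_of_rank_eq hV'] at hψ
  rw [← Module.finrank_eq_rank, ← Module.finrank_eq_rank] at hrange ⊢
  have hrange : Module.finrank K (range φ) * c ≤ Module.finrank L (range ψ) := by
    exact_mod_cast hrange
  have : Module.finrank L (ker ψ) ≤ c * Module.finrank K (ker φ) := by
    subst hφ
    nlinarith
  exact_mod_cast this

theorem dim_kernel_ge_general {G : Type} [Group G] (q : ℕ) [Fact (Nat.Prime q)]
    (QH : Type) [Field QH] (d t n : ℕ)
    (F : ModuleCat (MonoidAlgebra ℤ G) ⥤ ModuleCat (ZMod q))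
    (T : ModuleCat (MonoidAlgebra ℤ G) ⥤ ModuleCat QH)
    [F.Additive] [T.Additive]
    (hF1 : Module.rank (ZMod q)
      (F.obj (ModuleCat.of (MonoidAlgebra ℤ G) (MonoidAlgebra ℤ G))) = 1)
    (hTdt : Module.rank QH
      (T.obj (ModuleCat.of (MonoidAlgebra ℤ G) (MonoidAlgebra ℤ G))) = (d * t : ℕ))
    (hinj : ∀ (P P' : ModuleCat (MonoidAlgebra ℤ G)) (g : P ⟶ P'),
      Projective P → Projective P' →
      Function.Injective (F.map g) → Function.Injective (T.map g))
    (N : ModuleCat (MonoidAlgebra ℤ G)) (hN : Projective N)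
    (f : ModuleCat.of (MonoidAlgebra ℤ G) (Fin n → MonoidAlgebra ℤ G) ⟶ N) :
    Module.rank QH (LinearMap.ker (T.map f).hom) ≤
      (d * t : Cardinal) * Module.rank (ZMod q) (LinearMap.ker (F.map f).hom) := by
  obtain ⟨u, -, hu⟩ := rank_eq_one_iff.mp hF1
  obtain ⟨κ, _, a, hrankF, hinjF⟩ :=
    F.exists_mapDomainHom_injective_map_comp f ((Submodule.span_singleton_eq_top_iff _ u).mpr hu)
  have hinjT := hinj _ _ _ (ModuleCat.projective_of_free (Pi.basisFun _ κ)) hN hinjF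
  have hrankT : Module.rank (ZMod q) (LinearMap.range (F.map f).hom) * (d * t : ℕ) ≤
      Module.rank QH (LinearMap.range (T.map f).hom) :=
    calc Module.rank (ZMod q) (LinearMap.range (F.map f).hom) * (d * t : ℕ)
        = Module.rank QH (T.obj (ModuleCat.of _ (κ → MonoidAlgebra ℤ G))) := by
          rw [hrankF, T.rank_obj_pi, hTdt]
      _ = Module.rank QH (LinearMap.range (T.map (ModuleCat.mapDomainHom a ≫ f)).hom) :=
          (rank_range_of_injective _ hinjT).symm
      _ ≤ Module.rank QH (LinearMap.range (T.map f).hom) := by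
          rw [T.map_comp, ModuleCat.hom_comp]
          exact Submodule.rank_mono (LinearMap.range_comp_le_range _ _)
  exact_mod_cast LinearMap.rank_ker_le_mul_rank_ker (F.map f).hom (T.map f).hom n (d * t)
    (by simp [F.rank_obj_pi, hF1]) (by rw [T.rank_obj_pi, hTdt]; simp) hrankT

/-- Same setup as Statement 0 (abstracting `ℤ/q ⊗_{ℤG} -` and
`Q(H')^{dt} ⊗_{ℤG} -` as functors `F`, `T`), with additionally `M = (ℤG)^n` finitely
generated free and `N` projective. Then
`d·t · dim_{ℤ/q} Ker(F f) ≥ dim_{Q(H')} Ker(T f)`. -/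
theorem dim_kernel_ge {G : Type} [Group G] (q : ℕ) [Fact (Nat.Prime q)]
    (QH : Type) [Field QH] (d t n : ℕ)
    (F : ModuleCat (MonoidAlgebra ℤ G) ⥤ ModuleCat (ZMod q))
    (T : ModuleCat (MonoidAlgebra ℤ G) ⥤ ModuleCat QH)
    [F.Additive] [T.Additive] [F.PreservesEpimorphisms] [T.PreservesEpimorphisms]
    (hF1 : Module.rank (ZMod q)
      (F.obj (ModuleCat.of (MonoidAlgebra ℤ G) (MonoidAlgebra ℤ G))) = 1)
    (hTdt : Module.rank QH
      (T.obj (ModuleCat.of (MonoidAlgebra ℤ G) (MonoidAlgebra ℤ G))) = (d * t : ℕ))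
    (hinj : ∀ (P P' : ModuleCat (MonoidAlgebra ℤ G)) (g : P ⟶ P'),
      Projective P → Projective P' →
      Function.Injective (F.map g) → Function.Injective (T.map g))
    (N : ModuleCat (MonoidAlgebra ℤ G)) (hN : Projective N)
    (f : ModuleCat.of (MonoidAlgebra ℤ G) (Fin n → MonoidAlgebra ℤ G) ⟶ N) :
    Module.rank QH (LinearMap.ker (T.map f).hom) ≤
      (d * t : Cardinal) * Module.rank (ZMod q) (LinearMap.ker (F.map f).hom) :=
  dim_kernel_ge_general q QH d t n F T hF1 hTdt hinj N hN f
end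

section
/- Let N ≤ M be modules over a ring R, let L be an R-module, and let b: M × M → L be a sesquilinear pairing. Let N^⊥ = {m ∈ M : b(n,m) = 0 for all n ∈ N} and N^⊥⊥ = (N^⊥)^⊥. If the restriction map Hom_R(N^⊥, L) → Hom_R(N, L) is injective, then N^⊥⊥ = N^⊥ (where N ≤ N^⊥ is assumed). -/
variable {R : Type} [CommRing R] {M L : Type} [AddCommGroup M] [Module R M]
  [AddCommGroup L] [Module R L]

/-- The orthogonal complement `N^⊥ = {m ∈ M : b(n,m) = 0 for all n ∈ N}` of a submodule `N`
with respect to a bilinear pairing `b : M × M → L`. -/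
def perpSubmodule (b : M →ₗ[R] M →ₗ[R] L) (N : Submodule R M) : Submodule R M where
  carrier := {m | ∀ n ∈ N, b n m = 0}
  add_mem' := by
    intro a c ha hc n hn
    simp [ha n hn, hc n hn]
  zero_mem' := by intro n hn; simp
  smul_mem' := by
    intro r a ha n hn
    simp [ha n hn]

theorem mem_perpSubmodule {b : M →ₗ[R] M →ₗ[R] L} {N : Submodule R M} {m : M} :
    m ∈ perpSubmodule b N ↔ ∀ n ∈ N, b n m = 0 :=
  Iff.rfl

theorem perpSubmodule_antitone (b : M →ₗ[R] M →ₗ[R] L) : Antitone (perpSubmodule b) :=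
  fun _ _ hN _ hm n hn => hm n (hN hn)

/-- Let `b : M × M → L` be a bilinear pairing, `N ≤ N^⊥` a submodule on which
`b` vanishes. If the restriction map `Hom_R(N^⊥, L) → Hom_R(N, L)` is injective (i.e. every
homomorphism `N^⊥ → L` vanishing on `N` is zero), then `N^⊥⊥ = N^⊥`. -/
theorem perp_perp_eq_perp (b : M →ₗ[R] M →ₗ[R] L) (N : Submodule R M)
    (hN : N ≤ perpSubmodule b N)
    (hinj : ∀ φ : perpSubmodule b N →ₗ[R] L,
      (∀ n : M, (hn : n ∈ N) → φ ⟨n, hN hn⟩ = 0) → φ = 0) :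
    perpSubmodule b (perpSubmodule b N) = perpSubmodule b N := by
  refine le_antisymm (perpSubmodule_antitone b hN) fun m hm => ?_
  -- `b(·, m)` restricted to `N^⊥` vanishes on `N` precisely because `m ∈ N^⊥`.
  have hvanish : (b.flip m).domRestrict (perpSubmodule b N) = 0 :=
    hinj _ fun n hn => mem_perpSubmodule.mp hm n hn
  exact mem_perpSubmodule.mpr fun n hn => LinearMap.congr_fun hvanish ⟨n, hn⟩
end

section
/- For a nonzero finitely generated torsion module M over a Noetherian UFD R, the zeroth Alexander polynomial satisfies Δ₀(M) ≠ 0. -/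
/-!
Each generator `eⱼ` of `Rⁿ` is killed in `M` by some nonzerodivisor `rⱼ`, so `rⱼ eⱼ` is a
combination of rows of `A`; collecting these combinations gives a matrix `N` with
`N * A = diagonal r`. Expanding `det (N * A)` multilinearly in its rows writes it as a linear
combination of maximal minors of `A`. If `d = 0`, every maximal minor vanishes, hence so does
`∏ rⱼ`, a nonzerodivisor of a nonzero ring.
-/

/-- The set of all `k × k` minors of a matrix `A`. (Selections with repeated rows or
columns contribute `0`, which does not affect gcd considerations.) -/
def minorsSet {R : Type} [CommRing R] {m n : ℕ} (k : ℕ) (A : Matrix (Fin m) (Fin n) R) :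
    Set R :=
  Set.range (fun p : (Fin k → Fin m) × (Fin k → Fin n) => (A.submatrix p.1 p.2).det)

/-- `d` is a greatest common divisor of the set `S`. -/
def IsGCDOf {R : Type} [CommRing R] (d : R) (S : Set R) : Prop :=
  (∀ a ∈ S, d ∣ a) ∧ ∀ c : R, (∀ a ∈ S, c ∣ a) → c ∣ d

/-- The matrix `A` is a presentation matrix for the module `M` via the surjection `π`:
there is an exact sequence `R^m → R^n → M → 0` where the first map is `v ↦ v * A`. -/
def IsPresentation {R : Type} [CommRing R] {m n : ℕ} {M : Type} [AddCommGroup M]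
    [Module R M] (A : Matrix (Fin m) (Fin n) R) (π : (Fin n → R) →ₗ[R] M) : Prop :=
  Function.Surjective π ∧ LinearMap.ker π = LinearMap.range A.vecMulLinear

namespace Matrix

variable {R ι κ : Type*} [CommRing R] [Fintype ι] [Fintype κ] [DecidableEq κ]

theorem det_mul_eq_sum_prod_mul_det_submatrix (N : Matrix κ ι R) (A : Matrix ι κ R) :
    (N * A).det = ∑ σ : κ → ι, (∏ j, N j (σ j)) * (A.submatrix σ id).det := by
  classical
  have hrows : N * A = of fun j => ∑ i, N j i • A i := by
    ext j k
    simp [mul_apply, Finset.sum_apply]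
  change detRowAlternating (N * A) = _
  rw [hrows]
  refine (MultilinearMap.map_sum detRowAlternating.toMultilinearMap
    (fun j i => N j i • A i)).trans ?_
  congr! 1 with σ
  exact MultilinearMap.map_smul_univ _ _ _

end Matrix

open Matrix

theorem Module.IsTorsion.exists_mul_eq_diagonal {R M ι κ : Type*} [CommRing R] [AddCommGroup M]
    [Module R M] [Fintype ι] [DecidableEq κ] (hT : Module.IsTorsion R M) (A : Matrix ι κ R)
    (π : (κ → R) →ₗ[R] M) (hA : LinearMap.ker π ≤ LinearMap.range A.vecMulLinear) :
    ∃ (N : Matrix κ ι R) (r : κ → nonZeroDivisors R), N * A = diagonal fun j => (r j : R) := by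
  have hrow : ∀ j, ∃ r : nonZeroDivisors R, ∃ v : ι → R, v ᵥ* A = Pi.single j (r : R) := by
    intro j
    obtain ⟨r, hr⟩ := @hT (π (Pi.single j 1))
    obtain ⟨v, hv⟩ := hA (show (r : R) • Pi.single j (1 : R) ∈ LinearMap.ker π by
      rwa [LinearMap.mem_ker, map_smul, ← Submonoid.smul_def])
    exact ⟨r, v, by simpa [← Pi.single_smul] using hv⟩
  choose r N hN using hrow
  refine ⟨of N, r, ?_⟩
  funext j
  rw [mul_apply_eq_vecMul]
  exact (hN j).trans (row_diagonal (fun j => (r j : R)) j).symm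

theorem delta_zero_ne_zero_general {R : Type} [CommRing R] [IsDomain R]
    {M : Type} [AddCommGroup M] [Module R M]
    (hT : Module.IsTorsion R M)
    {m n : ℕ} (A : Matrix (Fin m) (Fin n) R) (π : (Fin n → R) →ₗ[R] M)
    (hA : IsPresentation A π)
    (d : R) (hd : IsGCDOf d (minorsSet n A)) :
    d ≠ 0 := by
  rintro rfl
  have hminors (σ : Fin n → Fin m) : (A.submatrix σ id).det = 0 :=
    zero_dvd_iff.mp (hd.1 _ ⟨(σ, id), rfl⟩)
  obtain ⟨N, r, hNA⟩ := hT.exists_mul_eq_diagonal A π hA.2.le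
  have hdet : (N * A).det = 0 := by
    simp [det_mul_eq_sum_prod_mul_det_submatrix, hminors]
  rw [hNA, det_diagonal] at hdet
  exact nonZeroDivisors.coe_ne_zero (∏ j, r j) (by simpa using hdet)

/-- For a nonzero finitely generated torsion module `M` over a Noetherian
UFD `R`, the zeroth Alexander polynomial `Δ₀(M)` (the gcd of the maximal minors of a
presentation matrix of `M`) is nonzero. -/
theorem delta_zero_ne_zero {R : Type} [CommRing R] [IsDomain R] [IsNoetherianRing R]
    [UniqueFactorizationMonoid R]
    {M : Type} [AddCommGroup M] [Module R M] [Module.Finite R M] [Nontrivial M]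
    (hT : Module.IsTorsion R M)
    {m n : ℕ} (A : Matrix (Fin m) (Fin n) R) (π : (Fin n → R) →ₗ[R] M)
    (hA : IsPresentation A π)
    (d : R) (hd : IsGCDOf d (minorsSet n A)) :
    d ≠ 0 :=
  delta_zero_ne_zero_general hT A π hA d hd
end
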